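/- arXiv:2308.04521 — 3 statements merged into one kernel-verified Lean document; each statement's English description precedes it below -/
import Mathlib

section
/- Let F be a Σ-frame with binary relations R_i, R_j, R_k satisfying: for all u, v, w, w', if Ruvw and w R_k w' then there exist x, y with Rxyw', u R_i x and v R_j y. Then for all upward-closed A, B one has [R_i]A · [R_j]B ⊆ [R_k](A · B). -/
def kprod {W : Type*} (R : W → W → W → Prop) (A B : Set W) : Set W :=
  {w | ∃ u v, R u v w ∧ u ∈ A ∧ v ∈ B}

def kbox {W : Type*} (Ri : W → W → Prop) (A : Set W) : Set W :=
  {u | ∀ w, Ri u w → w ∈ A}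

theorem stmt7_general {W : Type*} (R : W → W → W → Prop)
    (Ri Rj Rk : W → W → Prop)
    (hprom : ∀ u v w w', R u v w → Rk w w' →
      ∃ x y, R x y w' ∧ Ri u x ∧ Rj v y)
    (A B : Set W) :
    kprod R (kbox Ri A) (kbox Rj B) ⊆ kbox Rk (kprod R A B) := by
  rintro w ⟨u, v, hR, hu, hv⟩ w' hk
  obtain ⟨x, y, hR', hux, hvy⟩ := hprom u v w w' hR hk
  exact ⟨x, y, hR', hu x hux, hv y hvy⟩

/-- Promotion is sound on Σ-frames. -/
theorem stmt7 {W : Type*} [PartialOrder W] (R : W → W → W → Prop)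
    (Ri Rj Rk : W → W → Prop)
    (hprom : ∀ u v w w', R u v w → Rk w w' →
      ∃ x y, R x y w' ∧ Ri u x ∧ Rj v y)
    (A B : Set W) (hA : IsUpperSet A) (hB : IsUpperSet B) :
    kprod R (kbox Ri A) (kbox Rj B) ⊆ kbox Rk (kprod R A B) :=
  stmt7_general R Ri Rj Rk hprom A B
end

section
/- Let A be a Σ-algebra and A^σ the canonical extension of its lattice reduct, with !_i^σ x = ⋀{ !_i a | x ≤ a ∈ A } on filter elements and !_i^σ u = ⋁{ !_i^σ x | u ≥ x filter element } in general, and with ·^σ defined analogously. If k ⪯ i, j in Σ, then for all filter elements x, y of A^σ: !_i^σ x ·^σ !_j^σ y ≤ !_k^σ(x ·^σ y). -/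
/-!
The product `x ·^σ y` of filter elements is the meet of the codirected set
`{a * b | x ≤ a, y ≤ b}`. If it lies below some `c ∈ A`, compactness and codirectedness yield
a single pair `x ≤ a`, `y ≤ b` with `a * b ≤ c`. Promotion in `A` then gives
`!_i a · !_j b ≤ !_k (a * b) ≤ !_k c`, and `!_i^σ x ≤ !_i a`, `!_j^σ y ≤ !_j b`.
-/

/-- Filter elements of a canonical extension: meets of elements of `A`. -/
def IsFiltElt {A Aσ : Type*} [CompleteLattice Aσ] (e : A → Aσ) (x : Aσ) : Prop :=
  ∃ S : Set A, x = sInf (e '' S)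

/-- The product `·^σ` on filter elements. -/
def prodF {A Aσ : Type*} [Mul A] [CompleteLattice Aσ] (e : A → Aσ) (x y : Aσ) : Aσ :=
  sInf {z | ∃ a b : A, x ≤ e a ∧ y ≤ e b ∧ z = e (a * b)}

/-- The extension `!^σ` of a modality on filter elements. -/
def bangF {A Aσ : Type*} [CompleteLattice Aσ] (e : A → Aσ) (bang : A → A) (x : Aσ) : Aσ :=
  sInf {z | ∃ a : A, x ≤ e a ∧ z = e (bang a)}

open Set

theorem directedOn_ge_image2_mul {α : Type*} [SemilatticeInf α] [Mul α]
    (hmul : ∀ a b c d : α, a ≤ b → c ≤ d → a * c ≤ b * d) {U V : Set α}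
    (hU : InfClosed U) (hV : InfClosed V) :
    DirectedOn (· ≥ ·) (image2 (· * ·) U V) := by
  rintro _ ⟨a, ha, b, hb, rfl⟩ _ ⟨a', ha', b', hb', rfl⟩
  exact ⟨(a ⊓ a') * (b ⊓ b'), mem_image2_of_mem (hU ha ha') (hV hb hb'),
    hmul _ _ _ _ inf_le_left inf_le_left, hmul _ _ _ _ inf_le_right inf_le_right⟩

section CanonicalExtension

variable {A Aσ : Type*} [CompleteLattice Aσ] {e : A → Aσ}

theorem infClosed_setOf_le_of_map_inf [Lattice A] (hemeet : ∀ a b : A, e (a ⊓ b) = e a ⊓ e b)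
    (x : Aσ) :
    InfClosed {a | x ≤ e a} := fun a ha b hb => by
  simpa only [mem_ofPred_eq, hemeet] using le_inf ha hb

theorem prodF_eq_sInf_image [Mul A] (x y : Aσ) :
    prodF e x y = sInf (e '' image2 (· * ·) {a | x ≤ e a} {b | y ≤ e b}) := by
  unfold prodF
  congr 1
  ext z
  constructor
  · rintro ⟨a, b, ha, hb, rfl⟩
    exact ⟨a * b, mem_image2_of_mem ha hb, rfl⟩
  · rintro ⟨_, ⟨a, ha, b, hb, rfl⟩, rfl⟩
    exact ⟨a, b, ha, hb, rfl⟩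

theorem prodF_le [Mul A] {x y : Aσ} {a b : A} (ha : x ≤ e a) (hb : y ≤ e b) :
    prodF e x y ≤ e (a * b) :=
  sInf_le ⟨a, b, ha, hb, rfl⟩

theorem bangF_le {bang : A → A} {x : Aσ} {a : A} (ha : x ≤ e a) :
    bangF e bang x ≤ e (bang a) :=
  sInf_le ⟨a, ha, rfl⟩

theorem exists_mul_le_of_prodF_le [Lattice A] [BoundedOrder A] [Mul A]
    (hemeet : ∀ a b : A, e (a ⊓ b) = e a ⊓ e b)
    (hcompact : ∀ S T : Set A, sInf (e '' S) ≤ sSup (e '' T) →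
      ∃ S' T' : Finset A, ↑S' ⊆ S ∧ ↑T' ⊆ T ∧ S'.inf id ≤ T'.sup id)
    (hmulmono : ∀ a b c d : A, a ≤ b → c ≤ d → a * c ≤ b * d)
    {x y : Aσ} {c : A} (hc : prodF e x y ≤ e c) :
    ∃ a b : A, x ≤ e a ∧ y ≤ e b ∧ a * b ≤ c := by
  rw [prodF_eq_sInf_image] at hc
  set W := image2 (· * ·) {a | x ≤ e a} {b | y ≤ e b}
  -- if `W` were empty, its meet `⊤` would lie below `e c`, putting `c * c` in `W`
  have hW : W.Nonempty := by
    by_contra hempty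
    rw [not_nonempty_iff_eq_empty] at hempty
    rw [hempty, image_empty, sInf_empty] at hc
    have hcW : c * c ∈ W := mem_image2_of_mem (le_top.trans hc) (le_top.trans hc)
    rw [hempty] at hcW
    exact hcW
  obtain ⟨S', T', hS', hT', hST⟩ :=
    hcompact W {c} (by simpa only [image_singleton, sSup_singleton])
  have hT'c : T'.sup id ≤ c := Finset.sup_le fun t ht => (hT' ht).le
  obtain ⟨_, ⟨a, ha, b, hb, rfl⟩, hab⟩ := Finset.le_inf_of_directed_le W hW
    (directedOn_ge_image2_mul hmulmono (infClosed_setOf_le_of_map_inf hemeet x)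
      (infClosed_setOf_le_of_map_inf hemeet y)) S' fun s hs => ⟨s, hS' hs, le_rfl⟩
  exact ⟨a, b, ha, hb, hab.trans (hST.trans hT'c)⟩

end CanonicalExtension

theorem stmt11_general {A Aσ ι : Type*} [Lattice A] [BoundedOrder A] [Mul A] [CompleteLattice Aσ]
    (e : A → Aσ)
    -- `e` is a dense compact lattice embedding
    (he : ∀ a b : A, e a ≤ e b ↔ a ≤ b)
    (hemeet : ∀ a b : A, e (a ⊓ b) = e a ⊓ e b)
    (hcompact : ∀ S T : Set A, sInf (e '' S) ≤ sSup (e '' T) →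
      ∃ S' T' : Finset A, ↑S' ⊆ S ∧ ↑T' ⊆ T ∧ S'.inf id ≤ T'.sup id)
    -- Σ-algebra data
    (bang : ι → A → A) (i j k : ι)
    (hmulmono : ∀ a b c d : A, a ≤ b → c ≤ d → a * c ≤ b * d)
    (hbangmeet : ∀ (l : ι) (a b : A), bang l (a ⊓ b) = bang l a ⊓ bang l b)
    (hprom : ∀ a b : A, bang i a * bang j b ≤ bang k (a * b))
    -- filter elements
    (x y : Aσ) :
    prodF e (bangF e (bang i) x) (bangF e (bang j) y) ≤ bangF e (bang k) (prodF e x y) := by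
  refine le_sInf ?_
  rintro _ ⟨c, hc, rfl⟩
  obtain ⟨a, b, ha, hb, habc⟩ := exists_mul_le_of_prodF_le hemeet hcompact hmulmono hc
  calc prodF e (bangF e (bang i) x) (bangF e (bang j) y)
      ≤ e (bang i a * bang j b) := prodF_le (bangF_le ha) (bangF_le hb)
    _ ≤ e (bang k c) :=
      (he _ _).2 ((hprom a b).trans (Monotone.of_map_inf (hbangmeet k) habc))

/-- Promotion holds in the canonical extension on filter elements. -/
theorem stmt11 {A Aσ ι : Type*} [Lattice A] [BoundedOrder A] [Mul A] [CompleteLattice Aσ]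
    (e : A → Aσ)
    -- `e` is a dense compact lattice embedding
    (he : ∀ a b : A, e a ≤ e b ↔ a ≤ b)
    (hemeet : ∀ a b : A, e (a ⊓ b) = e a ⊓ e b)
    (hejoin : ∀ a b : A, e (a ⊔ b) = e a ⊔ e b)
    (hdense : ∀ x : Aσ, x = sSup {y | IsFiltElt e y ∧ y ≤ x})
    (hcompact : ∀ S T : Set A, sInf (e '' S) ≤ sSup (e '' T) →
      ∃ S' T' : Finset A, ↑S' ⊆ S ∧ ↑T' ⊆ T ∧ S'.inf id ≤ T'.sup id)
    -- Σ-algebra data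
    (bang : ι → A → A) (prec : ι → ι → Prop) (i j k : ι)
    (hki : prec k i) (hkj : prec k j)
    (hmulmono : ∀ a b c d : A, a ≤ b → c ≤ d → a * c ≤ b * d)
    (hbangmeet : ∀ (l : ι) (a b : A), bang l (a ⊓ b) = bang l a ⊓ bang l b)
    (hprom : ∀ a b : A, bang i a * bang j b ≤ bang k (a * b))
    -- filter elements
    (x y : Aσ) (hx : IsFiltElt e x) (hy : IsFiltElt e y) :
    prodF e (bangF e (bang i) x) (bangF e (bang j) y) ≤ bangF e (bang k) (prodF e x y) :=
  stmt11_general e he hemeet hcompact bang i j k hmulmono hbangmeet hprom x y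
end

section
/- Every completely distributive complete lattice L that is join-generated by its completely join-irreducible elements is isomorphic to the lattice of upward-closed subsets of the poset (J∞(L), ≤_δ) (Raney representation), via a ↦ { b ∈ J∞(L) | a ≤_δ b } where ≤_δ is the order dual to the restriction of the lattice order. -/
/-!
An element `a` is recovered from the completely join-irreducibles below it, since it is their
join; this gives injectivity and order reflection. Conversely, in a frame a completely
join-irreducible `j ≤ sSup T` satisfies `j = sSup (j ⊓ T)`, so `j ≤ t` for some `t ∈ T`: hence the
completely join-irreducibles below the join of a down-closed set `S` of them are exactly `S`.
-/

/-- `a` is completely join-irreducible. -/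
def CJI {L : Type*} [CompleteLattice L] (a : L) : Prop :=
  ∀ S : Set L, a = sSup S → a ∈ S

theorem CJI.exists_le_of_le_sSup {L : Type*} [Order.Frame L] {j : L} (hj : CJI j) {T : Set L}
    (h : j ≤ sSup T) : ∃ t ∈ T, j ≤ t := by
  have hj_eq : j = sSup ((j ⊓ ·) '' T) := by
    rw [sSup_image, ← inf_sSup_eq, inf_eq_left.mpr h]
  obtain ⟨t, ht, hjt⟩ := hj _ hj_eq
  exact ⟨t, ht, hjt ▸ inf_le_right⟩

theorem setOf_cji_le_sSup_image_eq {L : Type*} [Order.Frame L] {S : Set {j : L // CJI j}}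
    (hS : IsLowerSet S) : {b : {j : L // CJI j} | (b : L) ≤ sSup (Subtype.val '' S)} = S := by
  ext b
  refine ⟨fun hb => ?_, fun hb => le_sSup ⟨b, hb, rfl⟩⟩
  obtain ⟨_, ⟨c, hc, rfl⟩, hbc⟩ := b.2.exists_le_of_le_sSup hb
  exact hS hbc hc

theorem le_iff_setOf_cji_le_subset {L : Type*} [CompleteLattice L]
    (hjoin : ∀ a : L, a = sSup {j | CJI j ∧ j ≤ a}) (a b : L) :
    a ≤ b ↔
      {c : {j : L // CJI j} | (c : L) ≤ a} ⊆ {c : {j : L // CJI j} | (c : L) ≤ b} := by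
  refine ⟨fun h c hc => le_trans hc h, fun hsub => ?_⟩
  rw [hjoin a]
  exact sSup_le fun j ⟨hj, hja⟩ => hsub (show ((⟨j, hj⟩ : {j : L // CJI j}) : L) ≤ a from hja)

/-- Raney representation: a completely distributive complete lattice join-generated by
its completely join-irreducible elements is isomorphic to the lattice of
`≤_δ`-upward-closed subsets of `(J∞(L), ≤_δ)` via `a ↦ {b ∈ J∞(L) | a ≤_δ b}`. -/
theorem stmt17 {L : Type*} [CompletelyDistribLattice L]
    (hjoin : ∀ a : L, a = sSup {j | CJI j ∧ j ≤ a}) :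
    Function.Injective (fun a : L => {b : {j : L // CJI j} | (b : L) ≤ a}) ∧
    (∀ S : Set {j : L // CJI j},
      (∀ b c : {j : L // CJI j}, b ∈ S → (c : L) ≤ (b : L) → c ∈ S) →
      ∃ a : L, {b : {j : L // CJI j} | (b : L) ≤ a} = S) ∧
    (∀ a b : L, a ≤ b ↔
      {c : {j : L // CJI j} | (c : L) ≤ a} ⊆ {c : {j : L // CJI j} | (c : L) ≤ b}) := by
  have hiff := le_iff_setOf_cji_le_subset hjoin
  refine ⟨fun a b hab => ?_, fun S hS => ?_, hiff⟩
  · exact le_antisymm ((hiff a b).2 hab.le) ((hiff b a).2 hab.ge)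
  · exact ⟨_, setOf_cji_le_sSup_image_eq fun b c hcb hb => hS b c hb hcb⟩
end
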